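/- (The complete lift intertwines the total time derivative; Proposition 4.3 in the coordinate model.) Let n ≥ 1, k ≥ 0, and let η : ℝ^n → ℝ^n be a smooth vector field. Define its prolongations N^{(r)} : J_r → ℝ^n by N^{(0)}(A) := η(A_0) and N^{(r+1)} := D_T N^{(r)}. For a smooth F : J_k → ℝ define the complete-lift derivative (d_{η,k}F)(A) := ∑_{r=0}^{k} ∂_rF(A)( N^{(r)}(A|_{0,…,r}) ), where A|_{0,…,r} ∈ J_r is the truncation of A to slots 0,…,r. Then for every smooth F : J_k → ℝ and every A ∈ J_{k+1}: D_T(d_{η,k}F)(A) = (d_{η,k+1}(D_TF))(A). -/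

import Mathlib

/-!
Write `σ` for the shift `A ↦ (A₁, …, A_{k+1})` and `N(A)` for the jet whose slot `r` is
`N^{(r)}(A|_{0,…,r})`. Then `D_T F(A) = F'(Ā)(σA)` and `d_{η,k}F(B) = F'(B)(N B)`, so by the
product rule both sides of the identity equal `F''(Ā)(σA, N Ā) + F'(Ā)(σ N(A))`, up to the order
of the arguments of the symmetric bilinear map `F''(Ā)`. For the first-order terms one uses that
differentiating `N` along `σA` gives `σ N(A)`, because `D_T N^{(r)} = N^{(r+1)}`.
-/

noncomputable section

/-- Partial Fréchet derivative in slot `r` of a map defined on `Fin m → E`,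
as a continuous linear map (zero junk value for `r ≥ m`). -/
def pd {m : ℕ} {E W : Type*} [NormedAddCommGroup E] [NormedSpace ℝ E]
    [NormedAddCommGroup W] [NormedSpace ℝ W]
    (F : (Fin m → E) → W) (r : ℕ) (A : Fin m → E) : E →L[ℝ] W :=
  if h : r < m then
    (fderiv ℝ F A).comp
      (ContinuousLinearMap.pi (Pi.single (⟨r, h⟩ : Fin m) (ContinuousLinearMap.id ℝ E)))
  else 0

/-- The space of `k`-jets `J_k = (ℝ^n)^{k+1}`, slots indexed `0,…,k`. -/
abbrev Jet (n k : ℕ) := Fin (k + 1) → EuclideanSpace ℝ (Fin n)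

/-- A `1`-form of order `k` in the coordinate model: a map from `J_k` to the
`(k+1)`-tuples of linear functionals on `ℝ^n`. -/
abbrev OneForm (n k : ℕ) := Jet n k → Fin (k + 1) → (EuclideanSpace ℝ (Fin n) →L[ℝ] ℝ)

/-- Truncation of a jet to lower order. -/
def trunc {n k m : ℕ} (h : m ≤ k) (A : Jet n k) : Jet n m := fun i => A ⟨i, by omega⟩

/-- The `r`-th component of a 1-form at a jet, with the convention that components of
index `> k` are zero. -/
def comp' {n k : ℕ} (lam : OneForm n k) (A : Jet n k) (r : ℕ) :
    EuclideanSpace ℝ (Fin n) →L[ℝ] ℝ :=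
  if h : r < k + 1 then lam A ⟨r, h⟩ else 0

/-- The `r`-th component at a (possibly higher-order) jet of a 1-form of order `m`,
regarded as a 1-form of any order `k ≥ m` by precomposing with truncation. -/
def compAt {n k m : ℕ} (lam : OneForm n m) (A : Jet n k) (r : ℕ) :
    EuclideanSpace ℝ (Fin n) →L[ℝ] ℝ :=
  if h : m ≤ k then comp' lam (trunc h A) r else 0

/-- The vertical endomorphism: `(Sλ)(A)_r = (r+1) ⬝ λ(A)_{r+1}`. -/
def VS {n k : ℕ} (lam : OneForm n k) : OneForm n k :=
  fun A r => (((r : ℕ) + 1 : ℕ) : ℝ) • comp' lam A ((r : ℕ) + 1)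

/-- The total time derivative of a map `F : J_k → W`:
`D_T F (A) = ∑_{j=0}^{k} ∂_j F(Ā)(A_{j+1})`. -/
def DT {n k : ℕ} {W : Type*} [NormedAddCommGroup W] [NormedSpace ℝ W]
    (F : Jet n k → W) (A : Jet n (k + 1)) : W :=
  ∑ j : Fin (k + 1), pd F j (trunc (Nat.le_succ k) A) (A j.succ)

/-- The total time derivative of a 1-form of order `k`:
`(d_Tλ)(A)_r = D_T(λ_{(r)})(A) + λ(Ā)_{r-1}`, with `λ(Ā)_{-1} := 0`. -/
def dT {n k : ℕ} (lam : OneForm n k) : OneForm n (k + 1) :=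
  fun A r =>
    DT (fun B => comp' lam B r) A +
      match (r : ℕ) with
      | 0 => 0
      | (s + 1) => comp' lam (trunc (Nat.le_succ k) A) s

/-- Iterated total time derivative of a 1-form. -/
def dTiter {n k : ℕ} : (j : ℕ) → OneForm n k → OneForm n (k + j)
  | 0, lam => lam
  | (j + 1), lam => dT (dTiter j lam)

end

noncomputable section

/-- The prolongations of a vector field `η` on `ℝ^n`:
`N^{(0)}(A) = η(A₀)` and `N^{(r+1)} = D_T N^{(r)}`. -/
def Nprol {n : ℕ} (η : EuclideanSpace ℝ (Fin n) → EuclideanSpace ℝ (Fin n)) :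
    (r : ℕ) → Jet n r → EuclideanSpace ℝ (Fin n)
  | 0 => fun A => η (A 0)
  | (r + 1) => DT (Nprol η r)

/-- The complete-lift derivative of `F : J_k → ℝ` along the vector field `η`:
`(d_{η,k}F)(A) = ∑_{r=0}^{k} ∂_r F(A)(N^{(r)}(A|_{0,…,r}))`. -/
def dEta {n k : ℕ} (η : EuclideanSpace ℝ (Fin n) → EuclideanSpace ℝ (Fin n))
    (F : Jet n k → ℝ) (A : Jet n k) : ℝ :=
  ∑ r : Fin (k + 1),
    pd F r A (Nprol η r (fun i : Fin ((r : ℕ) + 1) => A ⟨i, by omega⟩))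

section PartialDerivatives

variable {m : ℕ} {E W : Type*} [NormedAddCommGroup E] [NormedSpace ℝ E]
  [NormedAddCommGroup W] [NormedSpace ℝ W]

theorem pd_apply (F : (Fin m → E) → W) (r : Fin m) (A : Fin m → E) (v : E) :
    pd F r A v = fderiv ℝ F A (Pi.single r v) := by
  rw [pd, dif_pos r.isLt, ContinuousLinearMap.comp_apply]
  congr 1
  ext i : 1
  rcases eq_or_ne i r with rfl | h
  · simp
  · simp [Pi.single_eq_of_ne h]

theorem sum_pd_apply (F : (Fin m → E) → W) (A v : Fin m → E) :
    ∑ r : Fin m, pd F r A (v r) = fderiv ℝ F A v := by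
  simp_rw [pd_apply, ← map_sum, Finset.univ_sum_single]

theorem fderiv_fderiv_apply_comm {G : Type*} [NormedAddCommGroup G] [NormedSpace ℝ G]
    {F : E → W} {N : E → E} (T S : G →L[ℝ] E) {x v : G}
    (hF : ContDiffAt ℝ 2 F (T x)) (hN : DifferentiableAt ℝ N (T x))
    (hT : T v = N (T x)) (hS : S v = fderiv ℝ N (T x) (S x)) :
    fderiv ℝ (fun y => fderiv ℝ F y (N y)) (T x) (S x) =
      fderiv ℝ (fun y => fderiv ℝ F (T y) (S y)) x v := by
  have hF' : DifferentiableAt ℝ (fderiv ℝ F) (T x) :=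
    (hF.fderiv_right (m := 1) le_rfl).differentiableAt one_ne_zero
  have hsymm : fderiv ℝ (fderiv ℝ F) (T x) (S x) (N (T x)) =
      fderiv ℝ (fderiv ℝ F) (T x) (N (T x)) (S x) :=
    hF.isSymmSndFDerivAt (by simp [minSmoothness_of_isRCLikeNormedField]) _ _
  have hcomp : fderiv ℝ (fun y => fderiv ℝ F (T y)) x = (fderiv ℝ (fderiv ℝ F) (T x)).comp T :=
    (hF'.hasFDerivAt.comp x T.hasFDerivAt).fderiv
  have hFT : DifferentiableAt ℝ (fun y => fderiv ℝ F (T y)) x := hF'.comp x T.differentiableAt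
  rw [fderiv_clm_apply hF' hN, fderiv_clm_apply hFT S.differentiableAt, hcomp, S.fderiv]
  simp [hT, hS, hsymm]

end PartialDerivatives

section Jets

open scoped ContDiff

variable {n : ℕ}

def truncL (n : ℕ) {k m : ℕ} (h : m ≤ k) : Jet n k →L[ℝ] Jet n m :=
  ContinuousLinearMap.pi fun i => ContinuousLinearMap.proj ⟨i, by omega⟩

def shiftL (n k : ℕ) : Jet n (k + 1) →L[ℝ] Jet n k :=
  ContinuousLinearMap.pi fun j => ContinuousLinearMap.proj j.succ

theorem DT_eq_fderiv {k : ℕ} {W : Type*} [NormedAddCommGroup W] [NormedSpace ℝ W]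
    (F : Jet n k → W) (A : Jet n (k + 1)) :
    DT F A = fderiv ℝ F (truncL n k.le_succ A) (shiftL n k A) :=
  sum_pd_apply F _ _

theorem contDiff_DT {k : ℕ} {W : Type*} [NormedAddCommGroup W] [NormedSpace ℝ W]
    {m : WithTop ℕ∞} {F : Jet n k → W} (hF : ContDiff ℝ (m + 1) F) : ContDiff ℝ m (DT F) := by
  have h : DT F = fun A => fderiv ℝ F (truncL n k.le_succ A) (shiftL n k A) :=
    funext (DT_eq_fderiv F)
  rw [h]
  exact ((hF.fderiv_right le_rfl).comp (truncL n _).contDiff).clm_apply (shiftL n k).contDiff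

variable (η : EuclideanSpace ℝ (Fin n) → EuclideanSpace ℝ (Fin n))

def prolVec {k : ℕ} (A : Jet n k) : Jet n k :=
  fun r => Nprol η r (truncL n (Nat.lt_succ_iff.mp r.isLt) A)

theorem dEta_eq_fderiv {k : ℕ} (F : Jet n k → ℝ) (A : Jet n k) :
    dEta η F A = fderiv ℝ F A (prolVec η A) :=
  sum_pd_apply F A (prolVec η A)

theorem truncL_prolVec {k m : ℕ} (h : m ≤ k) (A : Jet n k) :
    truncL n h (prolVec η A) = prolVec η (truncL n h A) :=
  rfl

variable {η}

theorem contDiff_Nprol (hη : ContDiff ℝ ∞ η) : ∀ r, ContDiff ℝ ∞ (Nprol η r)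
  | 0 => hη.comp (contDiff_apply ℝ _ 0)
  | r + 1 => contDiff_DT (by rw [ENat.coe_top_add_one]; exact contDiff_Nprol hη r)

theorem contDiff_prolVec (hη : ContDiff ℝ ∞ η) (k : ℕ) : ContDiff ℝ ∞ (prolVec η (k := k)) :=
  contDiff_pi.2 fun r => (contDiff_Nprol hη r).comp (truncL n _).contDiff

/-- This is `D_T N^{(r)} = N^{(r+1)}`, read slot by slot. -/
theorem fderiv_prolVec_shiftL (hη : ContDiff ℝ ∞ η) {k : ℕ} (A : Jet n (k + 1)) :
    fderiv ℝ (prolVec η) (truncL n k.le_succ A) (shiftL n k A) = shiftL n k (prolVec η A) := by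
  have hdiff (r : ℕ) : Differentiable ℝ (Nprol η r) :=
    (contDiff_Nprol hη r).differentiable (by simp)
  unfold prolVec
  rw [fderiv_pi (φ := fun (r : Fin (k + 1)) B => Nprol η r (truncL n (Nat.lt_succ_iff.mp r.isLt) B))
    fun r => ((hdiff r).comp (truncL n _).differentiable).differentiableAt]
  ext1 r
  rw [ContinuousLinearMap.pi_apply, fderiv_fun_comp _ (hdiff r _) (truncL n _).differentiableAt,
    (truncL n _).fderiv]
  exact (DT_eq_fderiv (Nprol η r) (truncL n r.isLt A)).symm

end Jets

theorem complete_lift_intertwines_total_time_derivative_general (n k : ℕ)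
    (η : EuclideanSpace ℝ (Fin n) → EuclideanSpace ℝ (Fin n)) (hη : ContDiff ℝ (⊤ : ℕ∞) η)
    (F : Jet n k → ℝ) (hF : ContDiff ℝ (⊤ : ℕ∞) F) (A : Jet n (k + 1)) :
    DT (dEta η F) A = dEta η (DT F) A := by
  have hdEta : dEta η F = fun B => fderiv ℝ F B (prolVec η B) := funext (dEta_eq_fderiv η F)
  have hDT : DT F = fun B => fderiv ℝ F (truncL n k.le_succ B) (shiftL n k B) :=
    funext (DT_eq_fderiv F)
  rw [DT_eq_fderiv, dEta_eq_fderiv, hdEta, hDT]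
  exact fderiv_fderiv_apply_comm _ _ (hF.contDiffAt.of_le (WithTop.coe_le_coe.2 le_top))
    ((contDiff_prolVec hη k).differentiable (by simp) _) (truncL_prolVec η _ A)
    (fderiv_prolVec_shiftL hη A).symm

/-- **The complete lift intertwines the total time derivative** (Proposition 4.3 of the
paper, in the coordinate model): for a smooth vector field `η` on `ℝ^n` and every smooth
`F : J_k → ℝ`, `D_T(d_{η,k}F) = d_{η,k+1}(D_T F)` on `J_{k+1}`. -/
theorem complete_lift_intertwines_total_time_derivative (n k : ℕ) (hn : 1 ≤ n)
    (η : EuclideanSpace ℝ (Fin n) → EuclideanSpace ℝ (Fin n)) (hη : ContDiff ℝ (⊤ : ℕ∞) η)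
    (F : Jet n k → ℝ) (hF : ContDiff ℝ (⊤ : ℕ∞) F) (A : Jet n (k + 1)) :
    DT (dEta η F) A = dEta η (DT F) A :=
  complete_lift_intertwines_total_time_derivative_general n k η hη F hF A

end
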